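/- The Dunkl Laplacian Δ_k = Σ_{i=1}^N T_{ξ_i}(k)² (for an orthonormal basis ξ_1,…,ξ_N of ℝ^N) acts on C² functions f by Δ_k f(x) = Δf(x) + 2 Σ_{α∈R_+} k(α) [⟨∇f(x),α⟩/⟨α,x⟩ − (f(x) − f(σ_α x))/⟨α,x⟩²]. -/

import Mathlib

open Finset

/-- The reflection `σ_α` in the hyperplane perpendicular to a root `α`
(normalized so that `⟨α,α⟩ = 2`): `σ_α x = x - ⟨α,x⟩ α`. -/
noncomputable def dunklReflect {N : ℕ} (α x : EuclideanSpace ℝ (Fin N)) :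
    EuclideanSpace ℝ (Fin N) :=
  x - (inner ℝ α x : ℝ) • α

/-- The rational Dunkl operator `T_ξ(k)` attached to a positive subsystem `R₊`
and multiplicity `k`. -/
noncomputable def dunklOp {N : ℕ} (Rplus : Finset (EuclideanSpace ℝ (Fin N)))
    (k : EuclideanSpace ℝ (Fin N) → ℝ) (ξ : EuclideanSpace ℝ (Fin N))
    (f : EuclideanSpace ℝ (Fin N) → ℝ) (x : EuclideanSpace ℝ (Fin N)) : ℝ :=
  fderiv ℝ f x ξ +
    ∑ α ∈ Rplus, k α * (inner ℝ α ξ : ℝ) * ((f x - f (dunklReflect α x)) / (inner ℝ α x : ℝ))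

namespace Dunkl
variable {N : ℕ}
local notation "E" => EuclideanSpace ℝ (Fin N)

noncomputable def rCLM (α : E) : E →L[ℝ] E :=
  ContinuousLinearMap.id ℝ _ - (innerSL ℝ α).smulRight α

lemma rCLM_apply (α x : E) : rCLM α x = dunklReflect α x := rfl

lemma inner_reflect_right (α β x : E) :
    (inner ℝ β (dunklReflect α x) : ℝ) = (inner ℝ (dunklReflect α β) x : ℝ) := by
  unfold dunklReflect
  rw [inner_sub_right, inner_sub_left, real_inner_smul_right, real_inner_smul_left,
    real_inner_comm β α]
  ring

lemma reflect_neg_left (α x : E) : dunklReflect (-α) x = dunklReflect α x := by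
  unfold dunklReflect
  rw [inner_neg_left]
  module

lemma reflect_invol (α : E) (h2 : (inner ℝ α α : ℝ) = 2) (x : E) :
    dunklReflect α (dunklReflect α x) = x := by
  unfold dunklReflect
  rw [inner_sub_right, real_inner_smul_right, h2]
  module

lemma reflect_self (α : E) (h2 : (inner ℝ α α : ℝ) = 2) :
    dunklReflect α α = -α := by
  unfold dunklReflect
  rw [h2]
  module

lemma reflect_conj (α β : E) (h2 : (inner ℝ β β : ℝ) = 2) (x : E) :
    dunklReflect (dunklReflect β α) x
      = dunklReflect β (dunklReflect α (dunklReflect β x)) := by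
  unfold dunklReflect
  rw [inner_sub_left, real_inner_smul_left]
  rw [show (inner ℝ α (x - (inner ℝ β x:ℝ) • β) : ℝ)
      = (inner ℝ α x : ℝ) - (inner ℝ β x : ℝ) * (inner ℝ α β : ℝ) from by
    rw [inner_sub_right, real_inner_smul_right]]
  rw [inner_sub_right, real_inner_smul_right, inner_sub_right, real_inner_smul_right, h2,
    real_inner_comm β α]
  module

/-- the coefficient used in the discrete telescoping -/
noncomputable def Gd (d a b : ℝ) : ℝ :=
  d * (d * a - 2 * b) / (2 * (a * (a ^ 2 + b ^ 2 - d * (a * b))))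

lemma key_alg (d a b : ℝ) (ha : a ≠ 0) (hb : b ≠ 0)
    (hQ : a ^ 2 + b ^ 2 - d * (a * b) ≠ 0) :
    Gd d a b - Gd (-d) b (a - d * b) = -(d / (a * b)) := by
  unfold Gd
  rw [show b ^ 2 + (a - d * b) ^ 2 - -d * (b * (a - d * b))
      = a ^ 2 + b ^ 2 - d * (a * b) from by ring]
  field_simp
  have hQ' : -(d * b * a) + b ^ 2 + a ^ 2 ≠ 0 := by intro h; apply hQ; linear_combination h
  linear_combination (-2 * d) * mul_inv_cancel₀ hQ'

/-- strict Cauchy-Schwarz for distinct roots -/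
lemma dlt (α β : E) (h2a : (inner ℝ α α : ℝ) = 2) (h2b : (inner ℝ β β : ℝ) = 2)
    (hne : β ≠ α) (hne' : β ≠ -α) : (inner ℝ α β : ℝ) ^ 2 < 4 := by
  set d := (inner ℝ α β : ℝ) with hd
  have h8 : (inner ℝ ((2:ℝ) • α - d • β) ((2:ℝ) • α - d • β) : ℝ) = 8 - 2 * d ^ 2 := by
    simp only [real_inner_sub_sub_self, real_inner_smul_left, real_inner_smul_right,
      h2a, h2b, ← hd]
    ring
  have hnn : 0 ≤ 8 - 2 * d ^ 2 := h8 ▸ real_inner_self_nonneg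
  rcases eq_or_lt_of_le (by nlinarith : d ^ 2 ≤ 4) with heq | hlt
  · exfalso
    have hz : ((2:ℝ) • α - d • β) = 0 := by
      have : (inner ℝ ((2:ℝ) • α - d • β) ((2:ℝ) • α - d • β) : ℝ) = 0 := by
        rw [h8]; nlinarith
      exact inner_self_eq_zero.mp this
    have h2d : (d - 2) * (d + 2) = 0 := by nlinarith
    rcases mul_eq_zero.mp h2d with h | h
    · have hd2 : d = 2 := by linarith
      apply hne
      have : (2:ℝ) • α = (2:ℝ) • β := by
        rw [sub_eq_zero] at hz; rw [hz, hd2]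
      exact (smul_right_injective E (by norm_num : (2:ℝ) ≠ 0) this).symm
    · have hd2 : d = -2 := by linarith
      apply hne'
      have : (2:ℝ) • α = (2:ℝ) • (-β) := by
        rw [sub_eq_zero] at hz; rw [hz, hd2]; module
      have := smul_right_injective E (by norm_num : (2:ℝ) ≠ 0) this
      rw [this]; simp
  · exact hlt

lemma reflect_neg_right (α x : E) : dunklReflect α (-x) = -dunklReflect α x := by
  unfold dunklReflect
  rw [inner_neg_right]
  module

/-- difference quotient -/
noncomputable def uq (f : E → ℝ) (β y : E) : ℝ :=
  (f y - f (dunklReflect β y)) / (inner ℝ β y : ℝ)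

noncomputable def tPair (f k : E → ℝ) (x : E) (p : E × E) : ℝ :=
  k p.1 * k p.2 * (inner ℝ p.1 p.2 : ℝ) *
    ((f x - f (dunklReflect p.2 (dunklReflect p.1 x))) /
      ((inner ℝ p.1 x : ℝ) * (inner ℝ p.2 x : ℝ)))

noncomputable def HPair (f k : E → ℝ) (x : E) (p : E × E) : ℝ :=
  k p.1 * k p.2 * (f x - f (dunklReflect p.2 (dunklReflect p.1 x))) *
    Gd (inner ℝ p.1 p.2 : ℝ) (inner ℝ p.1 x : ℝ) (inner ℝ p.2 x : ℝ)

lemma t_eq (R : Finset (EuclideanSpace ℝ (Fin N)))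
    (hnorm : ∀ α ∈ R, (inner ℝ α α : ℝ) = 2) (k : E → ℝ)
    (hkinv : ∀ α ∈ R, ∀ β ∈ R, k (dunklReflect α β) = k β)
    (f : E → ℝ) (x : E) (hx : ∀ α ∈ R, (inner ℝ α x : ℝ) ≠ 0)
    (α β : E) (hα : α ∈ R) (hβ : β ∈ R) (h1 : β ≠ α) (h2 : β ≠ -α) :
    tPair f k x (α, β) = HPair f k x (β, dunklReflect β α) - HPair f k x (α, β) := by
  have hna : (inner ℝ α x : ℝ) ≠ 0 := hx α hα
  have hnb : (inner ℝ β x : ℝ) ≠ 0 := hx β hβ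
  have h2a := hnorm α hα
  have h2b := hnorm β hβ
  have hd4 : (inner ℝ α β : ℝ) ^ 2 < 4 := dlt α β h2a h2b h1 h2
  have hb2 : (0:ℝ) < (inner ℝ β x : ℝ) ^ 2 := by positivity
  have hQpos : (0:ℝ) < (inner ℝ α x : ℝ) ^ 2 + (inner ℝ β x : ℝ) ^ 2
      - (inner ℝ α β : ℝ) * ((inner ℝ α x : ℝ) * (inner ℝ β x : ℝ)) := by
    nlinarith [sq_nonneg (2 * (inner ℝ α x : ℝ) - (inner ℝ α β : ℝ) * (inner ℝ β x : ℝ)),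
      mul_pos (show (0:ℝ) < 4 - (inner ℝ α β : ℝ) ^ 2 by linarith) hb2]
  have hQ := hQpos.ne'
  have hkk : k (dunklReflect β α) = k α := hkinv β hβ α hα
  have hσσ : dunklReflect (dunklReflect β α) (dunklReflect β x)
      = dunklReflect β (dunklReflect α x) := by
    rw [reflect_conj α β h2b (dunklReflect β x), reflect_invol β h2b x]
  have hdb : (inner ℝ β (dunklReflect β α) : ℝ) = -(inner ℝ α β : ℝ) := by
    rw [inner_reflect_right β β α, reflect_self β h2b, inner_neg_left, real_inner_comm]
  have hbx : (inner ℝ (dunklReflect β α) x : ℝ)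
      = (inner ℝ α x : ℝ) - (inner ℝ α β : ℝ) * (inner ℝ β x : ℝ) := by
    rw [show dunklReflect β α = α - (inner ℝ β α : ℝ) • β from rfl, inner_sub_left,
      real_inner_smul_left, real_inner_comm β α]
  have hk2 := key_alg (inner ℝ α β : ℝ) (inner ℝ α x : ℝ) (inner ℝ β x : ℝ) hna hnb hQ
  simp only [tPair, HPair, hkk, hσσ, hdb, hbx]
  linear_combination (k α * k β * (f x - f (dunklReflect β (dunklReflect α x)))) * hk2

lemma sum_tPair_zero [DecidableEq (EuclideanSpace ℝ (Fin N))]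
    (R : Finset (EuclideanSpace ℝ (Fin N)))
    (hnorm : ∀ α ∈ R, (inner ℝ α α : ℝ) = 2)
    (hrefl : ∀ α ∈ R, ∀ β ∈ R, dunklReflect α β ∈ R)
    (k : E → ℝ)
    (hkinv : ∀ α ∈ R, ∀ β ∈ R, k (dunklReflect α β) = k β)
    (f : E → ℝ) (x : E) (hx : ∀ α ∈ R, (inner ℝ α x : ℝ) ≠ 0) :
    ∑ p ∈ (R ×ˢ R).filter (fun p => p.2 ≠ p.1 ∧ p.2 ≠ -p.1), tPair f k x p = 0 := by
  have hstep : ∀ p ∈ (R ×ˢ R).filter (fun p => p.2 ≠ p.1 ∧ p.2 ≠ -p.1),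
      tPair f k x p = HPair f k x (p.2, dunklReflect p.2 p.1) - HPair f k x p := by
    rintro ⟨α, β⟩ hp
    simp only [Finset.mem_filter, Finset.mem_product] at hp
    exact t_eq R hnorm k hkinv f x hx α β hp.1.1 hp.1.2 hp.2.1 hp.2.2
  rw [Finset.sum_congr rfl hstep, Finset.sum_sub_distrib]
  have hswap : ∑ p ∈ (R ×ˢ R).filter (fun p => p.2 ≠ p.1 ∧ p.2 ≠ -p.1),
      HPair f k x (p.2, dunklReflect p.2 p.1)
      = ∑ p ∈ (R ×ˢ R).filter (fun p => p.2 ≠ p.1 ∧ p.2 ≠ -p.1), HPair f k x p := by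
    refine Finset.sum_nbij' (fun p => (p.2, dunklReflect p.2 p.1))
      (fun p => (dunklReflect p.1 p.2, p.1)) ?_ ?_ ?_ ?_ ?_
    · rintro ⟨α, β⟩ hp
      simp only [Finset.mem_filter, Finset.mem_product] at hp ⊢
      obtain ⟨⟨hα, hβ⟩, hne1, hne2⟩ := hp
      refine ⟨⟨hβ, hrefl β hβ α hα⟩, ?_, ?_⟩
      · intro hc
        have h3 : α = -β := by
          have := congrArg (dunklReflect β) hc
          rwa [reflect_invol β (hnorm β hβ), reflect_self β (hnorm β hβ)] at this
        exact hne2 (by rw [h3, neg_neg])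
      · intro hc
        have h3 : α = β := by
          have := congrArg (dunklReflect β) hc
          rwa [reflect_invol β (hnorm β hβ), reflect_neg_right,
            reflect_self β (hnorm β hβ), neg_neg] at this
        exact hne1 h3.symm
    · rintro ⟨β, γ⟩ hp
      simp only [Finset.mem_filter, Finset.mem_product] at hp ⊢
      obtain ⟨⟨hβ, hγ⟩, hne1, hne2⟩ := hp
      refine ⟨⟨hrefl β hβ γ hγ, hβ⟩, ?_, ?_⟩
      · intro hc
        have h3 : -β = γ := by
          have := congrArg (dunklReflect β) hc
          rwa [reflect_invol β (hnorm β hβ), reflect_self β (hnorm β hβ)] at this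
        exact hne2 h3.symm
      · intro hc
        have hc' : dunklReflect β γ = -β := by rw [← neg_eq_iff_eq_neg] at hc ⊢; rw [← hc, neg_neg]
        have h3 : γ = β := by
          have := congrArg (dunklReflect β) hc'
          rwa [reflect_invol β (hnorm β hβ), reflect_neg_right,
            reflect_self β (hnorm β hβ), neg_neg] at this
        exact hne1 h3
    · rintro ⟨α, β⟩ hp
      simp only [Finset.mem_filter, Finset.mem_product] at hp
      show (dunklReflect β (dunklReflect β α), β) = (α, β)
      rw [reflect_invol β (hnorm β hp.1.2) α]
    · rintro ⟨β, γ⟩ hp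
      simp only [Finset.mem_filter, Finset.mem_product] at hp
      show (β, dunklReflect β (dunklReflect β γ)) = (β, γ)
      rw [reflect_invol β (hnorm β hp.1.1) γ]
    · rintro ⟨α, β⟩ _; rfl
  rw [hswap, sub_self]

/-- fold a ±-symmetric sum over the full system to the positive subsystem -/
lemma fold' (S Sp : Finset E) (hsubf : Sp ⊆ S)
    (hmem : ∀ β ∈ S, (β ∈ Sp ↔ ¬(-β ∈ Sp)))
    (hnegS : ∀ β ∈ S, -β ∈ S)
    (G : E → ℝ) (hG : ∀ β ∈ S, G (-β) = G β) :
    ∑ β ∈ S, G β = 2 * ∑ β ∈ Sp, G β := by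
  classical
  have key : ∑ β ∈ S \ Sp, G β = ∑ β ∈ Sp, G β := by
    refine Finset.sum_nbij' (fun β => -β) (fun β => -β) ?_ ?_ ?_ ?_ ?_
    · intro β hβ
      rw [Finset.mem_sdiff] at hβ
      have h1 := (hmem β hβ.1)
      exact not_not.mp (fun hc => hβ.2 (h1.mpr hc))
    · intro β hβ
      rw [Finset.mem_sdiff]
      exact ⟨hnegS β (hsubf hβ), (hmem β (hsubf hβ)).mp hβ⟩
    · intro β _; simp
    · intro β _; simp
    · intro β hβ
      rw [Finset.mem_sdiff] at hβ
      exact (hG β hβ.1).symm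
  have := Finset.sum_sdiff (f := G) hsubf
  linarith

lemma sumP (R : Finset E) (φ : E → E → ℝ)
    [DecidableEq (EuclideanSpace ℝ (Fin N))] :
    ∑ p ∈ (R ×ˢ R).filter (fun p => p.2 ≠ p.1 ∧ p.2 ≠ -p.1), φ p.1 p.2
      = ∑ α ∈ R, ∑ β ∈ R.filter (fun β => β ≠ α ∧ β ≠ -α), φ α β := by
  rw [Finset.sum_filter, Finset.sum_product]
  refine Finset.sum_congr rfl fun α _ => ?_
  rw [Finset.sum_filter]


noncomputable def Fc (f k : E → ℝ) (x α β : E) : ℝ :=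
  k α * k β * (inner ℝ α β : ℝ) * ((uq f β x - uq f β (dunklReflect α x)) / (inner ℝ α x : ℝ))

noncomputable def Ac (f k : E → ℝ) (x α β : E) : ℝ :=
  k α * k β * (inner ℝ α β : ℝ) * (uq f β x / (inner ℝ α x : ℝ))

noncomputable def Bc (f k : E → ℝ) (x α β : E) : ℝ :=
  k α * k β * (inner ℝ α β : ℝ) * (uq f β (dunklReflect α x) / (inner ℝ α x : ℝ))

noncomputable def Cc (f k : E → ℝ) (x α β : E) : ℝ :=
  -(k α * k β * (inner ℝ α β : ℝ) *
    ((f (dunklReflect α x) - f (dunklReflect α (dunklReflect β x)))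
      / (inner ℝ β x : ℝ) / (inner ℝ α x : ℝ)))

lemma cross_zero [DecidableEq (EuclideanSpace ℝ (Fin N))]
    (R Rplus : Finset (EuclideanSpace ℝ (Fin N))) (k : E → ℝ)
    (hnorm : ∀ α ∈ R, (inner ℝ α α : ℝ) = 2)
    (hrefl : ∀ α ∈ R, ∀ β ∈ R, dunklReflect α β ∈ R)
    (hsub : Rplus ⊆ R)
    (hdecomp : ∀ α ∈ R, (α ∈ Rplus ↔ ¬ (-α ∈ Rplus)))
    (hkinv : ∀ α ∈ R, ∀ β ∈ R, k (dunklReflect α β) = k β)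
    (f : E → ℝ) (x : E) (hx : ∀ α ∈ R, (inner ℝ α x : ℝ) ≠ 0) :
    ∑ α ∈ Rplus, ∑ β ∈ Rplus, Fc f k x α β = 0 := by
  have hnegR : ∀ α ∈ R, -α ∈ R := fun α hα => by
    have h := hrefl α hα α hα; rwa [reflect_self α (hnorm α hα)] at h
  have hkneg : ∀ α ∈ R, k (-α) = k α := fun α hα => by
    have h := hkinv α hα α hα; rwa [reflect_self α (hnorm α hα)] at h
  have uq_neg : ∀ (β y : E), uq f (-β) y = -uq f β y := by
    intro β y; unfold uq; rw [reflect_neg_left, inner_neg_left, div_neg]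
  have hFneg2 : ∀ (α : E), ∀ β ∈ R, Fc f k x α (-β) = Fc f k x α β := by
    intro α β hβ; unfold Fc
    rw [hkneg β hβ, inner_neg_right, uq_neg, uq_neg]; ring
  have hFneg1 : ∀ α ∈ R, ∀ (β : E), Fc f k x (-α) β = Fc f k x α β := by
    intro α hα β; unfold Fc
    rw [hkneg α hα, inner_neg_left, reflect_neg_left, inner_neg_left]; ring
  have hdiagF : ∀ α ∈ Rplus, Fc f k x α α = 0 := by
    intro α hα; unfold Fc
    have h1 : uq f α (dunklReflect α x) = uq f α x := by
      unfold uq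
      rw [reflect_invol α (hnorm α (hsub hα)), inner_reflect_right α α x,
        reflect_self α (hnorm α (hsub hα)), inner_neg_left]
      ring
    rw [h1, sub_self, zero_div, mul_zero]
  have hpneg : ∀ (α β : E), ((-β ≠ α ∧ -β ≠ -α) ↔ (β ≠ α ∧ β ≠ -α)) := by
    intro α β
    constructor
    · rintro ⟨h1, h2⟩
      exact ⟨fun hc => h2 (by rw [hc]), fun hc => h1 (by rw [hc, neg_neg])⟩
    · rintro ⟨h1, h2⟩
      exact ⟨fun hc => h2 (by rw [← hc, neg_neg]), fun hc => h1 (neg_injective hc)⟩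
  -- remove diagonal, restrict to filtered positive system
  have herase : ∀ α ∈ Rplus,
      Rplus.filter (fun β => β ≠ α ∧ β ≠ -α) = Rplus.erase α := by
    intro α hα; ext β
    simp only [Finset.mem_filter, Finset.mem_erase]
    constructor
    · rintro ⟨h1, h2, h3⟩; exact ⟨h2, h1⟩
    · rintro ⟨h2, h1⟩
      refine ⟨h1, h2, fun hc => ?_⟩
      exact (hdecomp α (hsub hα)).mp hα (by rw [← hc]; exact h1)
  have e1 : ∀ α ∈ Rplus, ∑ β ∈ Rplus, Fc f k x α β
      = ∑ β ∈ Rplus.filter (fun β => β ≠ α ∧ β ≠ -α), Fc f k x α β := by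
    intro α hα
    rw [herase α hα, ← Finset.add_sum_erase Rplus _ hα, hdiagF α hα, zero_add]
  -- inner ℝ fold
  have e2 : ∀ α ∈ R, ∑ β ∈ R.filter (fun β => β ≠ α ∧ β ≠ -α), Fc f k x α β
      = 2 * ∑ β ∈ Rplus.filter (fun β => β ≠ α ∧ β ≠ -α), Fc f k x α β := by
    intro α hα
    refine fold' _ _ (Finset.filter_subset_filter _ hsub) ?_ ?_ _ ?_
    · intro β hβf
      simp only [Finset.mem_filter] at hβf ⊢
      constructor
      · rintro ⟨hB, hP⟩ ⟨hB', _⟩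
        exact (hdecomp β hβf.1).mp hB hB'
      · intro hn
        refine ⟨?_, hβf.2⟩
        by_contra hc
        have hB' : -β ∈ Rplus := not_not.mp fun hcc => hc ((hdecomp β hβf.1).mpr hcc)
        exact hn ⟨hB', (hpneg α β).mpr hβf.2⟩
    · intro β hβf
      simp only [Finset.mem_filter] at hβf ⊢
      exact ⟨hnegR β hβf.1, (hpneg α β).mpr hβf.2⟩
    · intro β hβf
      exact hFneg2 α β (Finset.mem_filter.mp hβf).1
  -- outer fold
  have e3 : ∑ α ∈ R, (∑ β ∈ Rplus.filter (fun β => β ≠ α ∧ β ≠ -α), Fc f k x α β)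
      = 2 * ∑ α ∈ Rplus, (∑ β ∈ Rplus.filter (fun β => β ≠ α ∧ β ≠ -α), Fc f k x α β) := by
    refine fold' R Rplus hsub hdecomp hnegR _ ?_
    intro α hα
    rw [Finset.filter_congr (fun β _ => by rw [neg_neg]; exact and_comm :
      ∀ β ∈ Rplus, ((β ≠ -α ∧ β ≠ -(-α)) ↔ (β ≠ α ∧ β ≠ -α)))]
    exact Finset.sum_congr rfl fun β _ => hFneg1 α hα β
  -- substitution β ↦ σ_α β in the B-part
  have hsubstep : ∀ α ∈ R, ∑ β ∈ R.filter (fun β => β ≠ α ∧ β ≠ -α), Bc f k x α β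
      = ∑ β ∈ R.filter (fun β => β ≠ α ∧ β ≠ -α), Cc f k x α β := by
    intro α hα
    have h2a := hnorm α hα
    refine (Finset.sum_nbij' (fun β => dunklReflect α β) (fun β => dunklReflect α β)
      ?_ ?_ ?_ ?_ ?_).symm
    · intro β hβf
      simp only [Finset.mem_filter] at hβf ⊢
      obtain ⟨hβ, hn1, hn2⟩ := hβf
      refine ⟨hrefl α hα β hβ, fun hc => ?_, fun hc => ?_⟩
      · have h3 : β = -α := by
          have := congrArg (dunklReflect α) hc
          rwa [reflect_invol α h2a, reflect_self α h2a] at this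
        exact hn2 h3
      · have h3 : β = α := by
          have := congrArg (dunklReflect α) hc
          rwa [reflect_invol α h2a, reflect_neg_right, reflect_self α h2a, neg_neg] at this
        exact hn1 h3
    · intro β hβf
      simp only [Finset.mem_filter] at hβf ⊢
      obtain ⟨hβ, hn1, hn2⟩ := hβf
      refine ⟨hrefl α hα β hβ, fun hc => ?_, fun hc => ?_⟩
      · have h3 : β = -α := by
          have := congrArg (dunklReflect α) hc
          rwa [reflect_invol α h2a, reflect_self α h2a] at this
        exact hn2 h3
      · have h3 : β = α := by
          have := congrArg (dunklReflect α) hc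
          rwa [reflect_invol α h2a, reflect_neg_right, reflect_self α h2a, neg_neg] at this
        exact hn1 h3
    · intro β _
      show dunklReflect α (dunklReflect α β) = β
      exact reflect_invol α h2a β
    · intro β _
      show dunklReflect α (dunklReflect α β) = β
      exact reflect_invol α h2a β
    · intro β hβf
      simp only [Finset.mem_filter] at hβf
      obtain ⟨hβ, hn1, hn2⟩ := hβf
      show Cc f k x α β = Bc f k x α (dunklReflect α β)
      unfold Bc Cc uq
      rw [hkinv α hα β hβ,
        show (inner ℝ α (dunklReflect α β) : ℝ) = -(inner ℝ α β : ℝ) from by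
          rw [inner_reflect_right α α β, reflect_self α h2a, inner_neg_left],
        show (inner ℝ (dunklReflect α β) (dunklReflect α x) : ℝ) = (inner ℝ β x : ℝ) from by
          rw [inner_reflect_right α (dunklReflect α β) x, reflect_invol α h2a],
        show dunklReflect (dunklReflect α β) (dunklReflect α x)
            = dunklReflect α (dunklReflect β x) from by
          rw [reflect_conj β α h2a (dunklReflect α x), reflect_invol α h2a x]]
      ring
  -- the full symmetrized sum vanishes by telescoping
  have hW : ∑ α ∈ R, ∑ β ∈ R.filter (fun β => β ≠ α ∧ β ≠ -α), Fc f k x α β = 0 := by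
    rw [← sumP R (fun α β => Fc f k x α β)]
    have hsplit : ∀ p ∈ (R ×ˢ R).filter (fun p => p.2 ≠ p.1 ∧ p.2 ≠ -p.1),
        Fc f k x p.1 p.2 = Ac f k x p.1 p.2 - Bc f k x p.1 p.2 := by
      intro p _; unfold Fc Ac Bc; ring
    rw [Finset.sum_congr rfl hsplit, Finset.sum_sub_distrib]
    have hB2C : ∑ p ∈ (R ×ˢ R).filter (fun p => p.2 ≠ p.1 ∧ p.2 ≠ -p.1), Bc f k x p.1 p.2
        = ∑ p ∈ (R ×ˢ R).filter (fun p => p.2 ≠ p.1 ∧ p.2 ≠ -p.1), Cc f k x p.1 p.2 := by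
      rw [sumP R (fun α β => Bc f k x α β), sumP R (fun α β => Cc f k x α β)]
      exact Finset.sum_congr rfl hsubstep
    rw [hB2C]
    have hCswap : ∑ p ∈ (R ×ˢ R).filter (fun p => p.2 ≠ p.1 ∧ p.2 ≠ -p.1), Cc f k x p.1 p.2
        = ∑ p ∈ (R ×ˢ R).filter (fun p => p.2 ≠ p.1 ∧ p.2 ≠ -p.1), Cc f k x p.2 p.1 := by
      refine Finset.sum_nbij' (fun p => (p.2, p.1)) (fun p => (p.2, p.1)) ?_ ?_ ?_ ?_ ?_
      · rintro ⟨a, c⟩ hp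
        simp only [Finset.mem_filter, Finset.mem_product] at hp ⊢
        obtain ⟨⟨ha, hc⟩, h1, h2⟩ := hp
        exact ⟨⟨hc, ha⟩, fun hcc => h1 hcc.symm, fun hcc => h2 (by rw [hcc, neg_neg])⟩
      · rintro ⟨a, c⟩ hp
        simp only [Finset.mem_filter, Finset.mem_product] at hp ⊢
        obtain ⟨⟨ha, hc⟩, h1, h2⟩ := hp
        exact ⟨⟨hc, ha⟩, fun hcc => h1 hcc.symm, fun hcc => h2 (by rw [hcc, neg_neg])⟩
      · rintro ⟨a, c⟩ _; rfl
      · rintro ⟨a, c⟩ _; rfl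
      · rintro ⟨a, c⟩ _; rfl
    rw [hCswap, ← Finset.sum_sub_distrib]
    have hfin : ∀ p ∈ (R ×ˢ R).filter (fun p => p.2 ≠ p.1 ∧ p.2 ≠ -p.1),
        Ac f k x p.1 p.2 - Cc f k x p.2 p.1 = tPair f k x p := by
      rintro ⟨a, c⟩ _
      unfold Ac Cc uq tPair
      dsimp only
      rw [real_inner_comm c a]
      ring
    rw [Finset.sum_congr rfl hfin]
    exact sum_tPair_zero R hnorm hrefl k hkinv f x hx
  -- put it all together
  have h4 : ∑ α ∈ R, ∑ β ∈ R.filter (fun β => β ≠ α ∧ β ≠ -α), Fc f k x α β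
      = ∑ α ∈ R, 2 * ∑ β ∈ Rplus.filter (fun β => β ≠ α ∧ β ≠ -α), Fc f k x α β :=
    Finset.sum_congr rfl e2
  have h5 : ∑ α ∈ R, 2 * (∑ β ∈ Rplus.filter (fun β => β ≠ α ∧ β ≠ -α), Fc f k x α β)
      = 2 * ∑ α ∈ R, (∑ β ∈ Rplus.filter (fun β => β ≠ α ∧ β ≠ -α), Fc f k x α β) := by
    rw [Finset.mul_sum]
  rw [Finset.sum_congr rfl e1]
  linarith [hW, h4, h5, e3]


/-- derivative of the difference quotient -/
lemma quot_hasFDerivAt (α : E) (f : E → ℝ) (hfd : Differentiable ℝ f)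
    (x : E) (ha : (inner ℝ α x : ℝ) ≠ 0) :
    HasFDerivAt (fun y => (f y - f (dunklReflect α y)) / (inner ℝ α y : ℝ))
      ((((inner ℝ α x : ℝ))^2)⁻¹ •
        (((inner ℝ α x : ℝ)) • (fderiv ℝ f x - (fderiv ℝ f (dunklReflect α x)).comp (rCLM α))
          - (f x - f (dunklReflect α x)) • (innerSL ℝ α : E →L[ℝ] ℝ))) x := by
  have hnum : HasFDerivAt (fun y => f y - f (dunklReflect α y))
      (fderiv ℝ f x - (fderiv ℝ f (dunklReflect α x)).comp (rCLM α)) x := by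
    have h2 : HasFDerivAt (fun y => f (dunklReflect α y))
        ((fderiv ℝ f (dunklReflect α x)).comp (rCLM α)) x := by
      have := ((hfd (dunklReflect α x)).hasFDerivAt).comp x ((rCLM α).hasFDerivAt)
      exact this
    exact ((hfd x).hasFDerivAt).sub h2
  have hinv : HasFDerivAt (fun y => ((inner ℝ α y : ℝ))⁻¹)
      ((ContinuousLinearMap.smulRight (1 : ℝ →L[ℝ] ℝ) (-(((inner ℝ α x : ℝ))^2)⁻¹)).comp
        (innerSL ℝ α : E →L[ℝ] ℝ)) x := by
    exact (hasFDerivAt_inv ha).comp x (innerSL ℝ α).hasFDerivAt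
  have hmul := hnum.mul hinv
  have heq : (fun y => (f y - f (dunklReflect α y)) / (inner ℝ α y : ℝ))
      = fun y => (f y - f (dunklReflect α y)) * ((inner ℝ α y : ℝ))⁻¹ := by
    funext y; rw [div_eq_mul_inv]
  rw [heq]
  refine hmul.congr_fderiv ?_
  apply ContinuousLinearMap.ext
  intro v
  simp only [ContinuousLinearMap.smul_apply, ContinuousLinearMap.sub_apply,
    ContinuousLinearMap.add_apply, ContinuousLinearMap.comp_apply,
    ContinuousLinearMap.smulRight_apply, ContinuousLinearMap.one_apply,
    innerSL_apply_apply, smul_eq_mul]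
  set a := (inner ℝ α x : ℝ) with hA
  set cv := (inner ℝ α v : ℝ) with hCV
  field_simp
  ring


lemma fderiv_dunklOp_apply (Rplus : Finset (EuclideanSpace ℝ (Fin N)))
    (k : E → ℝ) (ξ : E) (f : E → ℝ) (hf : ContDiff ℝ 2 f) (x : E)
    (ha : ∀ α ∈ Rplus, (inner ℝ α x : ℝ) ≠ 0) (v : E) :
    fderiv ℝ (dunklOp Rplus k ξ f) x v
      = fderiv ℝ (fun y => fderiv ℝ f y ξ) x v
        + ∑ α ∈ Rplus, k α * (inner ℝ α ξ : ℝ) *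
            (((fderiv ℝ f x v - fderiv ℝ f (dunklReflect α x) (dunklReflect α v))
                * (inner ℝ α x : ℝ)
              - (f x - f (dunklReflect α x)) * (inner ℝ α v : ℝ)) / (inner ℝ α x : ℝ)^2) := by
  have hfd : Differentiable ℝ f := hf.differentiable (by norm_num)
  have hD2 : DifferentiableAt ℝ (fun y => fderiv ℝ f y ξ) x := by
    have h1 : ContDiff ℝ 1 (fderiv ℝ f) := hf.fderiv_right (by norm_num)
    have h2 : Differentiable ℝ (fun y => fderiv ℝ f y ξ) := by
      have := (ContinuousLinearMap.apply ℝ ℝ ξ).differentiable.comp (h1.differentiable one_ne_zero)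
      exact this
    exact h2.differentiableAt
  have H : HasFDerivAt (dunklOp Rplus k ξ f)
      (fderiv ℝ (fun y => fderiv ℝ f y ξ) x
        + ∑ α ∈ Rplus, (k α * (inner ℝ α ξ : ℝ)) •
          ((((inner ℝ α x : ℝ))^2)⁻¹ •
            (((inner ℝ α x : ℝ)) • (fderiv ℝ f x - (fderiv ℝ f (dunklReflect α x)).comp (rCLM α))
              - (f x - f (dunklReflect α x)) • (innerSL ℝ α : E →L[ℝ] ℝ)))) x := by
    have : dunklOp Rplus k ξ f = fun y => fderiv ℝ f y ξ
        + ∑ α ∈ Rplus, k α * (inner ℝ α ξ : ℝ)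
            * ((f y - f (dunklReflect α y)) / (inner ℝ α y : ℝ)) := rfl
    rw [this]
    exact (hD2.hasFDerivAt).add (HasFDerivAt.fun_sum fun α hα =>
      ((quot_hasFDerivAt α f hfd x (ha α hα)).const_mul _))
  rw [H.fderiv]
  simp only [ContinuousLinearMap.add_apply, ContinuousLinearMap.coe_sum',
    Finset.sum_apply, ContinuousLinearMap.smul_apply, ContinuousLinearMap.sub_apply,
    ContinuousLinearMap.comp_apply, innerSL_apply_apply, smul_eq_mul, rCLM_apply]
  congr 1
  refine Finset.sum_congr rfl fun α hα => ?_
  have h0 : (inner ℝ α x : ℝ) ≠ 0 := ha α hα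
  set a := (inner ℝ α x : ℝ) with hA
  set cv := (inner ℝ α v : ℝ) with hCV
  field_simp


lemma sum_inner_apply (b : OrthonormalBasis (Fin N) ℝ (EuclideanSpace ℝ (Fin N)))
    (α : E) (L : E →L[ℝ] ℝ) :
    ∑ i, (inner ℝ α (b i) : ℝ) * L (b i) = L α := by
  conv_rhs => rw [← b.sum_repr α]
  rw [map_sum]
  refine Finset.sum_congr rfl fun i _ => ?_
  rw [b.repr_apply_apply, map_smul, smul_eq_mul, real_inner_comm]

lemma sum_inner_inner (b : OrthonormalBasis (Fin N) ℝ (EuclideanSpace ℝ (Fin N)))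
    (α β : E) :
    ∑ i, (inner ℝ α (b i) : ℝ) * (inner ℝ β (b i) : ℝ) = (inner ℝ α β : ℝ) := by
  have := b.sum_inner_mul_inner α β
  calc ∑ i, (inner ℝ α (b i) : ℝ) * (inner ℝ β (b i) : ℝ)
      = ∑ i, (inner ℝ α (b i) : ℝ) * (inner ℝ (b i) β : ℝ) := by
        refine Finset.sum_congr rfl fun i _ => by rw [real_inner_comm β]
    _ = (inner ℝ α β : ℝ) := this

end Dunkl

/-- the Dunkl Laplacian `Δ_k = Σᵢ T_{ξᵢ}(k)²` (for an orthonormal basis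
`ξ₁,…,ξ_N`) acts on C² functions by
`Δ_k f(x) = Δf(x) + 2 Σ_{α∈R₊} k(α) [⟨∇f(x),α⟩/⟨α,x⟩ − (f(x) − f(σ_α x))/⟨α,x⟩²]`. -/
theorem dunkl_laplacian_formula {N : ℕ}
    (R Rplus : Finset (EuclideanSpace ℝ (Fin N)))
    (k : EuclideanSpace ℝ (Fin N) → ℝ)
    (hR0 : (0 : EuclideanSpace ℝ (Fin N)) ∉ R)
    (hnorm : ∀ α ∈ R, (inner ℝ α α : ℝ) = 2)
    (hreduced : ∀ α ∈ R, ∀ c : ℝ, c • α ∈ R → c = 1 ∨ c = -1)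
    (hrefl : ∀ α ∈ R, ∀ β ∈ R, dunklReflect α β ∈ R)
    (hsub : Rplus ⊆ R)
    (hdecomp : ∀ α ∈ R, (α ∈ Rplus ↔ ¬ (-α ∈ Rplus)))
    (hk : ∀ α ∈ R, 0 ≤ k α)
    (hkinv : ∀ α ∈ R, ∀ β ∈ R, k (dunklReflect α β) = k β)
    (b : OrthonormalBasis (Fin N) ℝ (EuclideanSpace ℝ (Fin N)))
    (f : EuclideanSpace ℝ (Fin N) → ℝ) (hf : ContDiff ℝ 2 f)
    (x : EuclideanSpace ℝ (Fin N)) (hx : ∀ α ∈ R, (inner ℝ α x : ℝ) ≠ 0) :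
    ∑ i : Fin N, dunklOp Rplus k (b i) (dunklOp Rplus k (b i) f) x
      = (∑ i : Fin N, fderiv ℝ (fun y => fderiv ℝ f y (b i)) x (b i))
        + 2 * ∑ α ∈ Rplus, k α *
            (fderiv ℝ f x α / (inner ℝ α x : ℝ)
              - (f x - f (dunklReflect α x)) / (inner ℝ α x : ℝ) ^ 2) := by
  classical
  have hx' : ∀ α ∈ Rplus, (inner ℝ α x : ℝ) ≠ 0 := fun α hα => hx α (hsub hα)
  have hstep : ∀ ξ : EuclideanSpace ℝ (Fin N),
      dunklOp Rplus k ξ (dunklOp Rplus k ξ f) x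
        = fderiv ℝ (fun y => fderiv ℝ f y ξ) x ξ
          + (∑ α ∈ Rplus, k α * (inner ℝ α ξ : ℝ) *
              (((fderiv ℝ f x ξ - fderiv ℝ f (dunklReflect α x) (dunklReflect α ξ))
                  * (inner ℝ α x : ℝ)
                - (f x - f (dunklReflect α x)) * (inner ℝ α ξ : ℝ)) / (inner ℝ α x : ℝ)^2))
          + (∑ α ∈ Rplus, k α * (inner ℝ α ξ : ℝ) *
              ((fderiv ℝ f x ξ - fderiv ℝ f (dunklReflect α x) ξ) / (inner ℝ α x : ℝ)))
          + (∑ α ∈ Rplus, k α * (inner ℝ α ξ : ℝ) *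
              ((∑ β ∈ Rplus, k β * (inner ℝ β ξ : ℝ) *
                (Dunkl.uq f β x - Dunkl.uq f β (dunklReflect α x))) / (inner ℝ α x : ℝ))) := by
    intro ξ
    have h0 : dunklOp Rplus k ξ (dunklOp Rplus k ξ f) x
        = fderiv ℝ (dunklOp Rplus k ξ f) x ξ
          + ∑ α ∈ Rplus, k α * (inner ℝ α ξ : ℝ) *
              ((dunklOp Rplus k ξ f x - dunklOp Rplus k ξ f (dunklReflect α x))
                / (inner ℝ α x : ℝ)) := rfl
    rw [h0, Dunkl.fderiv_dunklOp_apply Rplus k ξ f hf x hx' ξ]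
    have hX : ∑ α ∈ Rplus, k α * (inner ℝ α ξ : ℝ) *
          ((dunklOp Rplus k ξ f x - dunklOp Rplus k ξ f (dunklReflect α x))
            / (inner ℝ α x : ℝ))
        = (∑ α ∈ Rplus, k α * (inner ℝ α ξ : ℝ) *
              ((fderiv ℝ f x ξ - fderiv ℝ f (dunklReflect α x) ξ) / (inner ℝ α x : ℝ)))
          + (∑ α ∈ Rplus, k α * (inner ℝ α ξ : ℝ) *
              ((∑ β ∈ Rplus, k β * (inner ℝ β ξ : ℝ) *
                (Dunkl.uq f β x - Dunkl.uq f β (dunklReflect α x))) / (inner ℝ α x : ℝ))) := by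
      rw [← Finset.sum_add_distrib]
      refine Finset.sum_congr rfl fun α hα => ?_
      have hnum : dunklOp Rplus k ξ f x - dunklOp Rplus k ξ f (dunklReflect α x)
          = (fderiv ℝ f x ξ - fderiv ℝ f (dunklReflect α x) ξ)
            + ∑ β ∈ Rplus, k β * (inner ℝ β ξ : ℝ) *
                (Dunkl.uq f β x - Dunkl.uq f β (dunklReflect α x)) := by
        show (fderiv ℝ f x ξ + ∑ β ∈ Rplus, k β * (inner ℝ β ξ : ℝ) * Dunkl.uq f β x)
            - (fderiv ℝ f (dunklReflect α x) ξ
              + ∑ β ∈ Rplus, k β * (inner ℝ β ξ : ℝ) * Dunkl.uq f β (dunklReflect α x)) = _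
        rw [show ∑ β ∈ Rplus, k β * (inner ℝ β ξ : ℝ) *
              (Dunkl.uq f β x - Dunkl.uq f β (dunklReflect α x))
            = ∑ β ∈ Rplus, (k β * (inner ℝ β ξ : ℝ) * Dunkl.uq f β x
                - k β * (inner ℝ β ξ : ℝ) * Dunkl.uq f β (dunklReflect α x)) from
          Finset.sum_congr rfl fun β _ => by ring, Finset.sum_sub_distrib]
        ring
      rw [hnum]
      ring
    rw [hX]
    ring
  rw [Finset.sum_congr rfl fun i _ => hstep (b i)]
  rw [Finset.sum_add_distrib, Finset.sum_add_distrib, Finset.sum_add_distrib]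
  have hA : (∑ i : Fin N, ∑ α ∈ Rplus, k α * (inner ℝ α (b i) : ℝ) *
        (((fderiv ℝ f x (b i) - fderiv ℝ f (dunklReflect α x) (dunklReflect α (b i)))
            * (inner ℝ α x : ℝ)
          - (f x - f (dunklReflect α x)) * (inner ℝ α (b i) : ℝ)) / (inner ℝ α x : ℝ)^2))
      = ∑ α ∈ Rplus, k α *
          (((fderiv ℝ f x α + fderiv ℝ f (dunklReflect α x) α) * (inner ℝ α x : ℝ)
            - (f x - f (dunklReflect α x)) * 2) / (inner ℝ α x : ℝ)^2) := by
    rw [Finset.sum_comm]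
    refine Finset.sum_congr rfl fun α hα => ?_
    have h2a := hnorm α (hsub hα)
    rw [Finset.sum_congr rfl (fun i (_ : i ∈ Finset.univ) =>
      (show k α * (inner ℝ α (b i) : ℝ) *
          (((fderiv ℝ f x (b i) - fderiv ℝ f (dunklReflect α x) (dunklReflect α (b i)))
              * (inner ℝ α x : ℝ)
            - (f x - f (dunklReflect α x)) * (inner ℝ α (b i) : ℝ)) / (inner ℝ α x : ℝ)^2)
        = (k α * (inner ℝ α x : ℝ) / (inner ℝ α x : ℝ)^2) *
            ((inner ℝ α (b i) : ℝ) * (fderiv ℝ f x) (b i))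
          - ((k α * (inner ℝ α x : ℝ) / (inner ℝ α x : ℝ)^2) *
            ((inner ℝ α (b i) : ℝ) *
              ((fderiv ℝ f (dunklReflect α x)).comp (Dunkl.rCLM α)) (b i))
          + (k α * (f x - f (dunklReflect α x)) / (inner ℝ α x : ℝ)^2) *
            ((inner ℝ α (b i) : ℝ) * (innerSL ℝ α) (b i))) from by
        simp only [ContinuousLinearMap.comp_apply, Dunkl.rCLM_apply, innerSL_apply_apply]
        ring))]
    rw [Finset.sum_sub_distrib, Finset.sum_add_distrib, ← Finset.mul_sum, ← Finset.mul_sum,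
      ← Finset.mul_sum, Dunkl.sum_inner_apply b α (fderiv ℝ f x),
      Dunkl.sum_inner_apply b α ((fderiv ℝ f (dunklReflect α x)).comp (Dunkl.rCLM α)),
      Dunkl.sum_inner_apply b α (innerSL ℝ α)]
    rw [show ((fderiv ℝ f (dunklReflect α x)).comp (Dunkl.rCLM α)) α
        = -(fderiv ℝ f (dunklReflect α x) α) from by
      rw [ContinuousLinearMap.comp_apply, Dunkl.rCLM_apply, Dunkl.reflect_self α h2a, map_neg]]
    rw [show ((innerSL ℝ α : EuclideanSpace ℝ (Fin N) →L[ℝ] ℝ)) α = (2:ℝ) from by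
      rw [innerSL_apply_apply]; exact h2a]
    ring
  have hB1 : (∑ i : Fin N, ∑ α ∈ Rplus, k α * (inner ℝ α (b i) : ℝ) *
        ((fderiv ℝ f x (b i) - fderiv ℝ f (dunklReflect α x) (b i)) / (inner ℝ α x : ℝ)))
      = ∑ α ∈ Rplus, k α *
          ((fderiv ℝ f x α - fderiv ℝ f (dunklReflect α x) α) / (inner ℝ α x : ℝ)) := by
    rw [Finset.sum_comm]
    refine Finset.sum_congr rfl fun α hα => ?_
    rw [Finset.sum_congr rfl (fun i (_ : i ∈ Finset.univ) =>
      (show k α * (inner ℝ α (b i) : ℝ) *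
          ((fderiv ℝ f x (b i) - fderiv ℝ f (dunklReflect α x) (b i)) / (inner ℝ α x : ℝ))
        = (k α / (inner ℝ α x : ℝ)) *
            ((inner ℝ α (b i) : ℝ) *
              ((fderiv ℝ f x - fderiv ℝ f (dunklReflect α x)) (b i))) from by
        simp only [ContinuousLinearMap.sub_apply]
        ring))]
    rw [← Finset.mul_sum,
      Dunkl.sum_inner_apply b α (fderiv ℝ f x - fderiv ℝ f (dunklReflect α x)),
      ContinuousLinearMap.sub_apply]
    ring
  have hB2 : (∑ i : Fin N, ∑ α ∈ Rplus, k α * (inner ℝ α (b i) : ℝ) *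
        ((∑ β ∈ Rplus, k β * (inner ℝ β (b i) : ℝ) *
          (Dunkl.uq f β x - Dunkl.uq f β (dunklReflect α x))) / (inner ℝ α x : ℝ)))
      = ∑ α ∈ Rplus, ∑ β ∈ Rplus, Dunkl.Fc f k x α β := by
    rw [Finset.sum_comm]
    refine Finset.sum_congr rfl fun α hα => ?_
    rw [Finset.sum_congr rfl (fun i (_ : i ∈ Finset.univ) =>
      (show k α * (inner ℝ α (b i) : ℝ) *
          ((∑ β ∈ Rplus, k β * (inner ℝ β (b i) : ℝ) *
            (Dunkl.uq f β x - Dunkl.uq f β (dunklReflect α x))) / (inner ℝ α x : ℝ))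
        = ∑ β ∈ Rplus, (k α * k β *
            ((Dunkl.uq f β x - Dunkl.uq f β (dunklReflect α x)) / (inner ℝ α x : ℝ))) *
            ((inner ℝ α (b i) : ℝ) * (inner ℝ β (b i) : ℝ)) from by
        rw [Finset.sum_div, Finset.mul_sum]
        exact Finset.sum_congr rfl fun β _ => by ring))]
    rw [Finset.sum_comm]
    refine Finset.sum_congr rfl fun β hβ => ?_
    rw [← Finset.mul_sum, Dunkl.sum_inner_inner b α β]
    unfold Dunkl.Fc
    ring
  rw [hA, hB1, hB2,
    Dunkl.cross_zero R Rplus k hnorm hrefl hsub hdecomp hkinv f x hx, add_zero]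
  rw [add_assoc]
  congr 1
  rw [← Finset.sum_add_distrib, Finset.mul_sum]
  refine Finset.sum_congr rfl fun α hα => ?_
  have ha := hx' α hα
  set a := (inner ℝ α x : ℝ) with hAx
  field_simp
  ring
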